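/- arXiv:2207.00486 — 4 statements merged into one kernel-verified Lean document; each statement's English description precedes it below -/
import Mathlib

section
/- Every principal minor of a nonsymmetric positive semidefinite matrix is nonnegative. That is, if L ∈ ℝ^{n×n} satisfies L + Lᵀ ⪰ 0 (i.e., L + Lᵀ is positive semidefinite), then for every subset S ⊆ [n], det(L_S) ≥ 0. -/
open Matrix

/-- Principal submatrix of `A` indexed by `S`. -/
def pSub {ι : Type*} [DecidableEq ι] (A : Matrix ι ι ℝ) (S : Finset ι) :
    Matrix S S ℝ := A.submatrix (fun i => (i : ι)) (fun j => (j : ι))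

/-!
If `A + Aᵀ ⪰ 0`, then along the segment `M t = (1 - t) • 1 + t • A` the symmetric part of `M t`
is positive definite for `t < 1`, so `M t` has no kernel (`vᵀ M v = vᵀ (M + Mᵀ) v / 2 > 0`).
Hence `det (M t)` is continuous and never vanishes on `[0, 1)`, starting from `det 1 = 1`, so
`det A = det (M 1) ≥ 0`. Principal submatrices inherit `L_S + L_Sᵀ = (L + Lᵀ)_S ⪰ 0`.
-/

namespace Matrix

variable {n : Type*} [DecidableEq n]

theorem det_ne_zero_of_posDef_add_transpose [Fintype n] {K : Type*} [Field K] [PartialOrder K]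
    [StarRing K] [TrivialStar K] {M : Matrix n n K} (hM : (M + Mᵀ).PosDef) : M.det ≠ 0 := by
  intro hdet
  obtain ⟨v, hv, hMv⟩ := exists_mulVec_eq_zero_iff.mpr hdet
  have hpos := hM.dotProduct_mulVec_pos hv
  rw [star_trivial, add_mulVec, mulVec_transpose, dotProduct_add, dotProduct_comm v (v ᵥ* M),
    ← dotProduct_mulVec, hMv, dotProduct_zero, add_zero] at hpos
  exact hpos.false

theorem posDef_add_transpose_lineMap_one {A : Matrix n n ℝ} (hA : (A + Aᵀ).PosSemidef)
    {t : ℝ} (ht₀ : 0 ≤ t) (ht₁ : t < 1) :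
    (AffineMap.lineMap 1 A t + (AffineMap.lineMap 1 A t)ᵀ).PosDef := by
  have hsum : AffineMap.lineMap 1 A t + (AffineMap.lineMap 1 A t)ᵀ =
      (2 * (1 - t)) • (1 : Matrix n n ℝ) + t • (A + Aᵀ) := by
    rw [AffineMap.lineMap_apply_module, transpose_add, transpose_smul, transpose_smul,
      transpose_one, smul_add, mul_smul]
    module
  rw [hsum]
  exact (PosDef.one.smul (by linarith)).add_posSemidef (hA.smul ht₀)

theorem det_nonneg_of_posSemidef_add_transpose [Fintype n] {A : Matrix n n ℝ}
    (hA : (A + Aᵀ).PosSemidef) : 0 ≤ A.det := by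
  set f : ℝ → ℝ := fun t => (AffineMap.lineMap 1 A t).det
  have hf : Continuous f :=
    (AffineMap.lineMap_continuous (p := (1 : Matrix n n ℝ)) (q := A)).matrix_det
  have hf_ne : ∀ t ∈ Set.Ico (0 : ℝ) 1, f t ≠ 0 := fun t ht =>
    det_ne_zero_of_posDef_add_transpose (posDef_add_transpose_lineMap_one hA ht.1 ht.2)
  by_contra! hneg
  have hf₁ : f 1 = A.det := by simp [f]
  obtain ⟨t, ht, hft⟩ := intermediate_value_Icc' zero_le_one hf.continuousOn
    (show (0 : ℝ) ∈ Set.Icc (f 1) (f 0) by simp [f, hf₁, hneg.le])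
  obtain rfl | ht₁ := ht.2.eq_or_lt
  · exact hneg.ne (hf₁ ▸ hft)
  · exact hf_ne t ⟨ht.1, ht₁⟩ hft

end Matrix

theorem nonsym_psd_principal_minor_nonneg {n : ℕ} (L : Matrix (Fin n) (Fin n) ℝ)
    (hL : (L + Lᵀ).PosSemidef) (S : Finset (Fin n)) : 0 ≤ (pSub L S).det :=
  det_nonneg_of_posSemidef_add_transpose (hL.submatrix Subtype.val)
end

section
/- Let G ∈ ℝ^{m×m} be symmetric positive definite and A ∈ ℝ^{m×m} skew-symmetric. Then det(G + A) ≥ det(G). -/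
/-!
Write `G = Bᵀ B` with `B` invertible. Then `G + A = Bᵀ (1 + S) B` with `S = B⁻ᵀ A B⁻¹` again
skew-symmetric, so it suffices to show `det (1 + S) ≥ 1`. Since `(1 + S)ᵀ (1 + S) = 1 + Sᵀ S`
and `Sᵀ S` is positive semidefinite, `det (1 + S) ^ 2 ≥ 1`; and `det (1 + S) > 0` because
`det (1 + t S)` never vanishes, as `vᵀ (1 + t S) v = vᵀ v`.
-/

open Matrix

namespace Matrix

variable {n : Type*} [Fintype n]

theorem dotProduct_mulVec_self_eq_zero_of_transpose_eq_neg {S : Matrix n n ℝ} (hS : Sᵀ = -S)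
    (v : n → ℝ) : v ⬝ᵥ S *ᵥ v = 0 := by
  have h : v ⬝ᵥ S *ᵥ v = -(v ⬝ᵥ S *ᵥ v) := by
    conv_lhs => rw [dotProduct_mulVec, ← mulVec_transpose, hS, neg_mulVec, dotProduct_comm]
    rw [dotProduct_neg]
  linarith

variable [DecidableEq n]

theorem det_one_add_ne_zero_of_transpose_eq_neg {S : Matrix n n ℝ} (hS : Sᵀ = -S) :
    (1 + S).det ≠ 0 := by
  intro h
  obtain ⟨v, hv, hSv⟩ := exists_mulVec_eq_zero_iff.mpr h
  have : v ⬝ᵥ v = 0 := by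
    simpa [add_mulVec, dotProduct_mulVec_self_eq_zero_of_transpose_eq_neg hS] using
      congrArg (v ⬝ᵥ ·) hSv
  exact hv (dotProduct_self_eq_zero.mp this)

theorem det_one_add_pos_of_transpose_eq_neg {S : Matrix n n ℝ} (hS : Sᵀ = -S) :
    0 < (1 + S).det := by
  have hcont : Continuous fun t : ℝ => (1 + t • S).det := by fun_prop
  by_contra! hle
  obtain ⟨t, -, ht⟩ := intermediate_value_Icc' zero_le_one hcont.continuousOn
    (show (0 : ℝ) ∈ Set.Icc _ _ from ⟨by simpa using hle, by simp⟩)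
  have hSt : (t • S)ᵀ = -(t • S) := by rw [transpose_smul, hS, smul_neg]
  exact det_one_add_ne_zero_of_transpose_eq_neg hSt ht

open scoped MatrixOrder in
theorem PosSemidef.one_le_det_one_add {M : Matrix n n ℝ} (hM : M.PosSemidef) :
    1 ≤ (1 + M).det := by
  have h : 1 + M = cfc (fun x : ℝ => 1 + x) M := by
    rw [cfc_add .., cfc_const_one .., cfc_id' ..]
  rw [h, hM.1.cfc_eq]
  simp only [IsHermitian.cfc, RCLike.ofReal_real_eq_id, CompTriple.comp_eq, det_map, det_diagonal,
    Function.comp_apply]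
  exact Finset.one_le_prod fun i _ => by linarith [hM.eigenvalues_nonneg i]

theorem one_le_det_one_add_of_transpose_eq_neg {S : Matrix n n ℝ} (hS : Sᵀ = -S) :
    1 ≤ (1 + S).det := by
  have hsq : (1 + S).det ^ 2 = (1 + Sᵀ * S).det := by
    rw [sq]
    conv_lhs => arg 1; rw [← det_transpose]
    rw [← det_mul, transpose_add, transpose_one, hS]
    noncomm_ring
  have hge : 1 ≤ (1 + S).det ^ 2 := by
    rw [hsq]
    exact (posSemidef_conjTranspose_mul_self S).one_le_det_one_add
  nlinarith [det_one_add_pos_of_transpose_eq_neg hS]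

open scoped MatrixOrder in
theorem PosDef.exists_isUnit_eq_transpose_mul_self {G : Matrix n n ℝ} (hG : G.PosDef) :
    ∃ B : Matrix n n ℝ, IsUnit B ∧ G = Bᵀ * B :=
  CStarAlgebra.isStrictlyPositive_iff_eq_star_mul_self.mp (isStrictlyPositive_iff_posDef.mpr hG)

end Matrix

/-- If `G` is symmetric positive definite and `A` is skew-symmetric, then
`det(G + A) ≥ det(G)`. -/
theorem det_add_skew_ge {m : ℕ} (G A : Matrix (Fin m) (Fin m) ℝ)
    (hG : G.PosDef) (hA : Aᵀ = -A) : G.det ≤ (G + A).det := by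
  obtain ⟨B, hB, rfl⟩ := hG.exists_isUnit_eq_transpose_mul_self
  set S := B⁻¹ᵀ * A * B⁻¹
  have hS : Sᵀ = -S := by simp [S, hA, Matrix.mul_assoc]
  have hBinv : B⁻¹ * B = 1 := nonsing_inv_mul B ((isUnit_iff_isUnit_det B).mp hB)
  have hfactor : Bᵀ * B + A = Bᵀ * (1 + S) * B := by
    have : Bᵀ * B⁻¹ᵀ = 1 := by rw [← transpose_mul, hBinv, transpose_one]
    simp only [S, Matrix.mul_add, Matrix.add_mul, Matrix.mul_one, ← Matrix.mul_assoc, this,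
      Matrix.one_mul]
    rw [Matrix.mul_assoc A, hBinv, Matrix.mul_one]
  rw [hfactor, det_mul, det_mul, det_mul, det_transpose]
  have := one_le_det_one_add_of_transpose_eq_neg hS
  nlinarith [mul_self_nonneg B.det]
end

section
/- (Youla symmetrization for 2×2 blocks.) Let σ ≥ 0 and consider the 2×2 skew block J = [[0, σ],[-σ, 0]] and its symmetrization Ĵ = [[σ, 0],[0, σ]] = σI_2. Then for a block diagonal skew-symmetric matrix A = Diag(J_1, …, J_{d/2}) with blocks J_i = [[0, σ_i],[-σ_i, 0]], σ_i ≥ 0, and its symmetrization = Diag(σ_1 I_2, …, σ_{d/2} I_2), every principal minor satisfies det(A_T) ≤ det(Â_T) for all T ⊆ [d]. -/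
/-!
Factor the skew matrix as `A = Â * S`, where `Â = diag(σ_{p.2})` is the symmetrization and `S` is
block diagonal with blocks `[[0, 1], [-1, 0]]`. Since `Â` is diagonal, `det A_T = det Â_T * det S_T`
with `det Â_T ≥ 0`, so it suffices that `det S_T ≤ 1`. Every row of `S_T` has at most one nonzero
entry, of absolute value at most one; such a matrix either has a zero column or becomes diagonal
after permuting its columns.
-/

open Matrix

namespace Matrix

variable {n R : Type*} [Fintype n] [DecidableEq n] [CommRing R] [LinearOrder R]
  [IsStrictOrderedRing R]

theorem abs_det_le_one_of_row_support_subsingleton (M : Matrix n n R)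
    (hrow : ∀ i j j', M i j ≠ 0 → M i j' ≠ 0 → j = j') (hle : ∀ i j, |M i j| ≤ 1) :
    |M.det| ≤ 1 := by
  obtain ⟨f, hf⟩ : ∃ f : n → n, ∀ i j, M i j ≠ 0 → j = f i := by
    classical
    refine ⟨fun i => if h : ∃ j, M i j ≠ 0 then h.choose else i, fun i j hij => ?_⟩
    have h : ∃ j, M i j ≠ 0 := ⟨j, hij⟩
    dsimp only
    rw [dif_pos h]
    exact hrow i j _ hij h.choose_spec
  by_cases hsurj : f.Surjective
  · let e := Equiv.ofBijective f hsurj.bijective_of_finite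
    have hdiag : M.submatrix id e = diagonal fun i => M i (f i) := by
      ext i j
      by_cases hij : i = j
      · subst hij; simp [e]
      · rw [diagonal_apply_ne _ hij]
        by_contra h
        exact hij (e.injective (hf i _ h).symm)
    have hdet := det_permute' e M
    rw [hdiag, det_diagonal] at hdet
    calc |M.det| = |∏ i, M i (f i)| := by
          rw [hdet, abs_mul, abs_unit_intCast, one_mul]
      _ ≤ 1 := by
          rw [Finset.abs_prod]
          exact Finset.prod_le_one (fun i _ => abs_nonneg _) (fun i _ => hle i _)
  · obtain ⟨j, hj⟩ := not_forall.mp hsurj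
    rw [det_eq_zero_of_column_eq_zero j fun i => not_not.mp fun h => hj ⟨i, (hf i j h).symm⟩,
      abs_zero]
    exact zero_le_one

end Matrix

section

variable {ι : Type*} [DecidableEq ι]

theorem det_pSub_diagonal (d : ι → ℝ) (T : Finset ι) :
    (pSub (diagonal d) T).det = ∏ i ∈ T, d i := by
  rw [pSub, submatrix_diagonal _ _ Subtype.coe_injective, det_diagonal]
  exact Finset.prod_coe_sort T d

theorem det_pSub_diagonal_mul [Fintype ι] (d : ι → ℝ) (M : Matrix ι ι ℝ) (T : Finset ι) :
    (pSub (diagonal d * M) T).det = (∏ i ∈ T, d i) * (pSub M T).det := by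
  have : pSub (diagonal d * M) T = diagonal (fun i : T => d i) * pSub M T := by
    ext i j
    simp only [pSub, submatrix_apply, diagonal_mul]
  rw [this, det_mul, det_diagonal, Finset.prod_coe_sort]

theorem det_pSub_blockDiagonal_rotation_le_one {o : Type*} [DecidableEq o]
    (T : Finset (Fin 2 × o)) :
    (pSub (blockDiagonal fun _ : o => !![(0 : ℝ), 1; -1, 0]) T).det ≤ 1 := by
  refine (le_abs_self _).trans (abs_det_le_one_of_row_support_subsingleton _ ?_ ?_)
  · rintro ⟨⟨k, i⟩, _⟩ ⟨⟨l, j⟩, hq⟩ ⟨⟨l', j'⟩, hq'⟩ h h'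
    simp only [pSub, submatrix_apply, blockDiagonal_apply, ne_eq, ite_eq_right_iff,
      Classical.not_imp] at h h'
    obtain ⟨rfl, h⟩ := h
    obtain ⟨rfl, h'⟩ := h'
    fin_cases k <;> fin_cases l <;> fin_cases l' <;> simp_all
  · rintro ⟨⟨k, i⟩, -⟩ ⟨⟨l, j⟩, -⟩
    simp only [pSub, submatrix_apply, blockDiagonal_apply]
    split_ifs
    · fin_cases k <;> fin_cases l <;> simp
    · simp
end

/-- Youla symmetrization for `2 × 2` blocks: for the block-diagonal skew-symmetric
matrix with blocks `[[0, σᵢ], [-σᵢ, 0]]` and its symmetrization with blocks `σᵢ I₂`,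
every principal minor of the former is at most that of the latter. -/
theorem blockDiag_youla_minor_le {r : ℕ} (σ : Fin r → ℝ) (hσ : ∀ i, 0 ≤ σ i)
    (T : Finset (Fin 2 × Fin r)) :
    (pSub (Matrix.blockDiagonal (fun i => !![0, σ i; -σ i, 0])) T).det
      ≤ (pSub (Matrix.blockDiagonal (fun i => σ i • (1 : Matrix (Fin 2) (Fin 2) ℝ))) T).det := by
  have hsym : Matrix.blockDiagonal (fun i => σ i • (1 : Matrix (Fin 2) (Fin 2) ℝ))
      = diagonal fun p => σ p.2 := by
    simp_rw [smul_one_eq_diagonal, blockDiagonal_diagonal]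
  have hskew : Matrix.blockDiagonal (fun i => !![0, σ i; -σ i, 0])
      = (diagonal fun p => σ p.2) * blockDiagonal fun _ : Fin r => !![(0 : ℝ), 1; -1, 0] := by
    rw [← hsym, ← blockDiagonal_mul]
    congr 1
    ext i : 1
    simp [smul_of]
  rw [hskew, hsym, det_pSub_diagonal_mul, det_pSub_diagonal]
  exact mul_le_of_le_one_right (Finset.prod_nonneg fun p _ => hσ p.2)
    (det_pSub_blockDiagonal_rotation_le_one T)
end

section
/- Let A ∈ ℝ^{d×d} be skew-symmetric and let Â be the symmetric PSD matrix with the same singular values and corresponding (Youla) eigenvector pairs: if A = Σ_i σ_i (y_i z_iᵀ - z_i y_iᵀ) is the Youla decomposition with orthonormal {y_i, z_i} and σ_i ≥ 0, then Â := Σ_i σ_i (y_i y_iᵀ + z_i z_iᵀ). Then for any B ∈ ℝ^{m×d}, with R = BABᵀ and R̂ = BÂBᵀ, every principal minor satisfies det(R_T) ≤ det(R̂_T) for all T ⊆ [m]. -/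
open Matrix

open scoped ComplexOrder

open scoped MatrixOrder

/-- If `S ± K` are positive semidefinite, then `|det K| ≤ re (det S)`. -/
lemma youla_key_det_le {n : Type*} [Fintype n] [DecidableEq n] {S K : Matrix n n ℂ}
    (hS : S.PosSemidef) (h1 : (S - K).PosSemidef) (h2 : (S + K).PosSemidef) :
    ‖K.det‖ ≤ (S.det).re := by
  have hdetS : S.det = ((∏ i, hS.1.eigenvalues i : ℝ) : ℂ) := by
    rw [hS.1.det_eq_prod_eigenvalues]; push_cast; rfl
  have htnn : 0 ≤ (∏ i, hS.1.eigenvalues i : ℝ) :=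
    Finset.prod_nonneg fun i _ => hS.eigenvalues_nonneg i
  by_cases hdet : S.det = 0
  · obtain ⟨v, hv, hSv⟩ := (Matrix.exists_mulVec_eq_zero_iff).mpr hdet
    have hq1 : star v ⬝ᵥ (S - K) *ᵥ v = -(star v ⬝ᵥ K *ᵥ v) := by
      rw [sub_mulVec, dotProduct_sub, hSv, dotProduct_zero, zero_sub]
    have a1 := h1.dotProduct_mulVec_nonneg v
    rw [hq1] at a1
    have h0 : star v ⬝ᵥ K *ᵥ v = 0 := by
      refine le_antisymm (neg_nonneg.mp a1) ?_
      have := h2.dotProduct_mulVec_nonneg v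
      rwa [add_mulVec, dotProduct_add, hSv, dotProduct_zero, zero_add] at this
    have hKv : K *ᵥ v = 0 := by
      have := (h1.dotProduct_mulVec_zero_iff v).mp (by rw [hq1, h0, neg_zero])
      rw [sub_mulVec, hSv, zero_sub, neg_eq_zero] at this
      exact this
    have : K.det = 0 := Matrix.exists_mulVec_eq_zero_iff.mp ⟨v, hv, hKv⟩
    rw [this, hdet]; simp
  · set R := CFC.sqrt S with hRdef
    have hR : R.PosSemidef := (CFC.sqrt_nonneg S).posSemidef
    have hRR : R * R = S := CFC.sqrt_mul_sqrt_self S hS.nonneg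
    have hdR : R.det ≠ 0 := by
      intro h; apply hdet; rw [← hRR, det_mul, h, zero_mul]
    have hRu : IsUnit R.det := isUnit_iff_ne_zero.mpr hdR
    have hRiR : R⁻¹ * R = 1 := nonsing_inv_mul R hRu
    have hRRi : R * R⁻¹ = 1 := mul_nonsing_inv R hRu
    have hRiH : R⁻¹ᴴ = R⁻¹ := hR.1.inv
    set C := R⁻¹ * K * R⁻¹ with hCdef
    have hKC : K = R * C * R := by
      rw [hCdef]
      calc K = (R * R⁻¹) * K * (R⁻¹ * R) := by rw [hRRi, hRiR, one_mul, mul_one]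
        _ = R * (R⁻¹ * K * R⁻¹) * R := by noncomm_ring
    have hRSR : R⁻¹ * S * R⁻¹ = 1 := by
      rw [← hRR]
      calc R⁻¹ * (R * R) * R⁻¹ = (R⁻¹ * R) * (R * R⁻¹) := by noncomm_ring
        _ = 1 := by rw [hRiR, hRRi, one_mul]
    have h1C : (1 - C).PosSemidef := by
      have := h1.conjTranspose_mul_mul_same (R⁻¹)
      rwa [hRiH, mul_sub, sub_mul, hRSR, ← hCdef] at this
    have h2C : (1 + C).PosSemidef := by
      have := h2.conjTranspose_mul_mul_same (R⁻¹)
      rwa [hRiH, mul_add, add_mul, hRSR, ← hCdef] at this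
    have hC : C.IsHermitian := by
      have := h2C.1.sub isHermitian_one
      simpa using this
    have hbound : ∀ i, |hC.eigenvalues i| ≤ 1 := by
      intro i
      set v : n → ℂ := ⇑(hC.eigenvectorBasis i) with hvdef
      have hvne : v ≠ 0 := by
        have h := hC.eigenvectorBasis.orthonormal.ne_zero i
        intro hz; apply h; ext j; exact congrFun hz j
      have hvv : 0 < (star v ⬝ᵥ v).re := by
        have h0 : star v ⬝ᵥ v ≠ 0 := fun h => hvne (dotProduct_star_self_eq_zero.mp h)
        have hnn : (0:ℂ) ≤ star v ⬝ᵥ v := dotProduct_star_self_nonneg v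
        exact (Complex.lt_def.mp (lt_of_le_of_ne hnn (Ne.symm h0))).1
      have hCv : C *ᵥ v = (hC.eigenvalues i : ℂ) • v := by
        have := hC.mulVec_eigenvectorBasis i
        rw [← hvdef] at this
        rw [this]; ext j; simp [Complex.real_smul]
      have hle : hC.eigenvalues i ≤ 1 := by
        have hq := h1C.re_dotProduct_nonneg v
        rw [sub_mulVec, one_mulVec, dotProduct_sub, hCv, dotProduct_smul] at hq
        simp only [RCLike.re_to_complex, Complex.sub_re, smul_eq_mul, Complex.mul_re,
          Complex.ofReal_re, Complex.ofReal_im, zero_mul, sub_zero] at hq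
        nlinarith
      have hge : -1 ≤ hC.eigenvalues i := by
        have hq := h2C.re_dotProduct_nonneg v
        rw [add_mulVec, one_mulVec, dotProduct_add, hCv, dotProduct_smul] at hq
        simp only [RCLike.re_to_complex, Complex.add_re, smul_eq_mul, Complex.mul_re,
          Complex.ofReal_re, Complex.ofReal_im, zero_mul, sub_zero] at hq
        nlinarith
      exact abs_le.mpr ⟨hge, hle⟩
    have hdetC : ‖C.det‖ ≤ 1 := by
      rw [hC.det_eq_prod_eigenvalues, norm_prod]
      refine Finset.prod_le_one (fun i _ => norm_nonneg _) (fun i _ => ?_)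
      rw [RCLike.norm_ofReal]
      exact hbound i
    have habs : ‖K.det‖
        = ‖R.det‖ * ‖R.det‖ * ‖C.det‖ := by
      rw [hKC, det_mul, det_mul, norm_mul, norm_mul]; ring
    have habsS : ‖S.det‖ = ‖R.det‖ * ‖R.det‖ := by
      rw [← hRR, det_mul, norm_mul]
    have hfin : ‖K.det‖ ≤ ‖S.det‖ := by
      rw [habs, habsS]
      nlinarith [norm_nonneg C.det, norm_nonneg R.det,
        mul_nonneg (norm_nonneg R.det) (norm_nonneg R.det)]
    calc ‖K.det‖ ≤ ‖S.det‖ := hfin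
      _ = (S.det).re := by
          rw [hdetS, Complex.norm_real, Real.norm_eq_abs, abs_of_nonneg htnn, Complex.ofReal_re]

/-- A nonnegative multiple of `u uᴴ` is positive semidefinite. -/
lemma youla_psd_rank_one {n : Type*} [Fintype n] (u : n → ℂ) {c : ℝ} (hc : 0 ≤ c) :
    ((c : ℂ) • vecMulVec u (star u)).PosSemidef := by
  have : (c : ℂ) • vecMulVec u (star u) =
      (Matrix.of (fun j (_ : Unit) => (Real.sqrt c : ℂ) * u j)) *
      (Matrix.of (fun j (_ : Unit) => (Real.sqrt c : ℂ) * u j))ᴴ := by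
    ext j k
    simp only [Matrix.smul_apply, vecMulVec_apply, Pi.star_apply, Matrix.mul_apply,
      Finset.univ_unique, Finset.sum_singleton, Matrix.of_apply, conjTranspose_apply,
      smul_eq_mul, star_mul', Complex.star_def, Complex.conj_ofReal]
    conv_lhs => rw [← Real.mul_self_sqrt hc, Complex.ofReal_mul]
    ring
  rw [this]
  exact posSemidef_self_mul_conjTranspose _

lemma youla_psd_sum {n ι : Type*} [Fintype n] (s : Finset ι) (f : ι → Matrix n n ℂ)
    (h : ∀ i ∈ s, (f i).PosSemidef) : (∑ i ∈ s, f i).PosSemidef :=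
  Finset.sum_induction f _ (fun _ _ ha hb => ha.add hb) .zero h

/-- Youla symmetrization dominates in all principal minors, also after a congruence
transform: if `A = Σᵢ σᵢ (yᵢ zᵢᵀ - zᵢ yᵢᵀ)` with `{yᵢ, zᵢ}` orthonormal and `σᵢ ≥ 0`,
and `Â = Σᵢ σᵢ (yᵢ yᵢᵀ + zᵢ zᵢᵀ)`, then `det((B A Bᵀ)_T) ≤ det((B Â Bᵀ)_T)`
for every `B` and every `T`. -/
theorem youla_symmetrization_minor_le {d r m : ℕ}
    (σ : Fin r → ℝ) (hσ : ∀ i, 0 ≤ σ i)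
    (y z : Fin r → Fin d → ℝ)
    (hyy : ∀ i j, y i ⬝ᵥ y j = if i = j then (1 : ℝ) else 0)
    (hzz : ∀ i j, z i ⬝ᵥ z j = if i = j then (1 : ℝ) else 0)
    (hyz : ∀ i j, y i ⬝ᵥ z j = (0 : ℝ))
    (A Ahat : Matrix (Fin d) (Fin d) ℝ)
    (hA : A = ∑ i, σ i • (vecMulVec (y i) (z i) - vecMulVec (z i) (y i)))
    (hAhat : Ahat = ∑ i, σ i • (vecMulVec (y i) (y i) + vecMulVec (z i) (z i)))
    (B : Matrix (Fin m) (Fin d) ℝ) (T : Finset (Fin m)) :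
    (pSub (B * A * Bᵀ) T).det ≤ (pSub (B * Ahat * Bᵀ) T).det := by
  classical
  -- complexifications
  set c : ℝ → ℂ := fun x => (x : ℂ) with hcdef
  set Ac : Matrix (Fin d) (Fin d) ℂ := A.map c with hAc
  set Ahc : Matrix (Fin d) (Fin d) ℂ := Ahat.map c with hAhc
  set Bc : Matrix (Fin m) (Fin d) ℂ := B.map c with hBc
  -- the three PSD facts on the complexified level
  have hPSDm : (Ahc - Complex.I • Ac).PosSemidef := by
    have heq : Ahc - Complex.I • Ac
        = ∑ i, ((σ i : ℂ)) • vecMulVec (fun j => (y i j : ℂ) + Complex.I * z i j)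
            (star (fun j => (y i j : ℂ) + Complex.I * z i j)) := by
      rw [hAhc, hAc, hA, hAhat]
      ext j k
      simp only [hcdef, Matrix.sub_apply, Matrix.add_apply, Matrix.map_apply, Matrix.sum_apply,
        Matrix.smul_apply, vecMulVec_apply, smul_eq_mul, Pi.star_apply, star_add, star_mul',
        Complex.star_def, Complex.conj_ofReal, Complex.conj_I]
      push_cast
      rw [Finset.mul_sum, ← Finset.sum_sub_distrib]
      refine Finset.sum_congr rfl fun i _ => ?_
      linear_combination ((σ i : ℂ) * (z i j : ℂ) * (z i k : ℂ)) * Complex.I_sq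
    rw [heq]
    exact youla_psd_sum _ _ fun i _ => youla_psd_rank_one _ (hσ i)
  have hPSDp : (Ahc + Complex.I • Ac).PosSemidef := by
    have heq : Ahc + Complex.I • Ac
        = ∑ i, ((σ i : ℂ)) • vecMulVec (fun j => (y i j : ℂ) - Complex.I * z i j)
            (star (fun j => (y i j : ℂ) - Complex.I * z i j)) := by
      rw [hAhc, hAc, hA, hAhat]
      ext j k
      simp only [hcdef, Matrix.sub_apply, Matrix.add_apply, Matrix.map_apply, Matrix.sum_apply,
        Matrix.smul_apply, vecMulVec_apply, smul_eq_mul, Pi.star_apply, star_sub, star_mul',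
        Complex.star_def, Complex.conj_ofReal, Complex.conj_I]
      push_cast
      rw [Finset.mul_sum, ← Finset.sum_add_distrib]
      refine Finset.sum_congr rfl fun i _ => ?_
      linear_combination ((σ i : ℂ) * (z i j : ℂ) * (z i k : ℂ)) * Complex.I_sq
    rw [heq]
    exact youla_psd_sum _ _ fun i _ => youla_psd_rank_one _ (hσ i)
  have hPSD0 : Ahc.PosSemidef := by
    have heq : Ahc = ∑ i, (((σ i : ℂ)) • vecMulVec (fun j => (y i j : ℂ))
          (star (fun j => (y i j : ℂ)))
        + ((σ i : ℂ)) • vecMulVec (fun j => (z i j : ℂ))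
          (star (fun j => (z i j : ℂ)))) := by
      rw [hAhc, hAhat]
      ext j k
      simp only [hcdef, Matrix.add_apply, Matrix.map_apply, Matrix.sum_apply,
        Matrix.smul_apply, vecMulVec_apply, smul_eq_mul, Pi.star_apply,
        Complex.star_def, Complex.conj_ofReal]
      push_cast
      refine Finset.sum_congr rfl fun i _ => ?_
      ring
    rw [heq]
    exact youla_psd_sum _ _ fun i _ =>
      (youla_psd_rank_one _ (hσ i)).add (youla_psd_rank_one _ (hσ i))
  -- congruence and principal submatrix
  have hBt : (Bᵀ).map c = Bcᴴ := by
    ext j k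
    simp [hcdef, hBc, conjTranspose_apply, Complex.conj_ofReal]
  have hfun : c = ⇑Complex.ofRealHom := rfl
  have hBXB : ∀ X : Matrix (Fin d) (Fin d) ℝ, (B * X * Bᵀ).map c = Bc * X.map c * Bcᴴ := by
    intro X
    rw [← hBt, hBc, hfun, Matrix.map_mul, Matrix.map_mul]
  -- the complexified principal submatrices
  set e : T → Fin m := fun i => (i : Fin m) with hedef
  set Sm : Matrix T T ℂ := (pSub (B * Ahat * Bᵀ) T).map c with hSm
  set Km : Matrix T T ℂ := Complex.I • (pSub (B * A * Bᵀ) T).map c with hKm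
  have hsubm : ∀ Y : Matrix (Fin m) (Fin m) ℝ, (pSub Y T).map c = (Y.map c).submatrix e e :=
    fun Y => rfl
  have hS : Sm.PosSemidef := by
    rw [hSm, hsubm, hBXB]
    exact (hPSD0.mul_mul_conjTranspose_same Bc).submatrix e
  have hSub : (Sm - Km).PosSemidef := by
    have : Sm - Km = ((Bc * (Ahc - Complex.I • Ac) * Bcᴴ)).submatrix e e := by
      rw [hSm, hKm, hsubm, hsubm, hBXB, hBXB]
      conv_rhs => rw [Matrix.mul_sub, Matrix.sub_mul, Matrix.mul_smul, Matrix.smul_mul]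
      ext j k
      simp [Matrix.sub_apply, Matrix.smul_apply]
      rfl
    rw [this]
    exact (hPSDm.mul_mul_conjTranspose_same Bc).submatrix e
  have hAdd : (Sm + Km).PosSemidef := by
    have : Sm + Km = ((Bc * (Ahc + Complex.I • Ac) * Bcᴴ)).submatrix e e := by
      rw [hSm, hKm, hsubm, hsubm, hBXB, hBXB]
      conv_rhs => rw [Matrix.mul_add, Matrix.add_mul, Matrix.mul_smul, Matrix.smul_mul]
      ext j k
      simp [Matrix.add_apply, Matrix.smul_apply]
      rfl
    rw [this]
    exact (hPSDp.mul_mul_conjTranspose_same Bc).submatrix e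
  -- apply the key determinant lemma
  have hkey := youla_key_det_le hS hSub hAdd
  have hdetS : Sm.det = ((pSub (B * Ahat * Bᵀ) T).det : ℂ) := by
    rw [hSm, hfun]
    exact (RingHom.map_det Complex.ofRealHom _).symm
  have hdetmap : ((pSub (B * A * Bᵀ) T).map c).det = ((pSub (B * A * Bᵀ) T).det : ℂ) := by
    rw [hfun]
    exact (RingHom.map_det Complex.ofRealHom _).symm
  have hdetK : ‖Km.det‖ = |(pSub (B * A * Bᵀ) T).det| := by
    rw [hKm, det_smul, hdetmap, norm_mul, norm_pow, Complex.norm_I, one_pow, one_mul,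
      Complex.norm_real, Real.norm_eq_abs]
  calc (pSub (B * A * Bᵀ) T).det ≤ |(pSub (B * A * Bᵀ) T).det| := le_abs_self _
    _ = ‖Km.det‖ := hdetK.symm
    _ ≤ (Sm.det).re := hkey
    _ = (pSub (B * Ahat * Bᵀ) T).det := by rw [hdetS, Complex.ofReal_re]
end
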